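/- arXiv:2307.08053 — 2 statements merged into one kernel-verified Lean document; each statement's English description precedes it below -/
import Mathlib

section
/- Let q be an odd prime power and m ≥ 2 even, n = (q^m-1)/(q-1), α a primitive element of GF(q^m), and a ∈ (GF(q)*)^n. Then the standardly extended code of the Hamming code Ham(q,m,a) = {c ∈ GF(q)^n : Σ_{i=0}^{n-1} c_i a_i α^i = 0} has minimum distance exactly 3. -/
set_option linter.unusedSectionVars false
set_option linter.unusedVariables false
set_option maxHeartbeats 1000000


open Finset

variable {F : Type*} [Field F] [Fintype F] [DecidableEq F]

/-- The extended code of `C` by the vector `u`: append the coordinate `∑ uᵢ cᵢ`. -/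
def extCode {n : ℕ} (C : Submodule F (Fin n → F)) (u : Fin n → F) :
    Submodule F (Fin (n + 1) → F) where
  carrier := {x | (fun i => x i.castSucc) ∈ C ∧
    x (Fin.last n) = ∑ i, u i * x i.castSucc}
  add_mem' := by
    rintro a b ⟨ha, ha'⟩ ⟨hb, hb'⟩
    refine ⟨C.add_mem ha hb, ?_⟩
    simp only [Pi.add_apply, ha', hb', mul_add, Finset.sum_add_distrib]
  zero_mem' := ⟨C.zero_mem, by simp⟩
  smul_mem' := by
    rintro a x ⟨hx, hx'⟩
    refine ⟨C.smul_mem a hx, ?_⟩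
    simp only [Pi.smul_apply, smul_eq_mul, hx', Finset.mul_sum]
    exact Finset.sum_congr rfl fun i _ => by ring

/-- The (Euclidean) dual code. -/
def dualCode {n : ℕ} (C : Submodule F (Fin n → F)) : Submodule F (Fin n → F) where
  carrier := {x | ∀ c ∈ C, ∑ i, x i * c i = 0}
  add_mem' := by
    intro a b ha hb c hc
    simp only [Pi.add_apply, add_mul, Finset.sum_add_distrib, ha c hc, hb c hc, add_zero]
  zero_mem' := by intro c hc; simp
  smul_mem' := by
    intro a x hx c hc
    simp only [Pi.smul_apply, smul_eq_mul, mul_assoc, ← Finset.mul_sum, hx c hc, mul_zero]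

/-- Minimum (Hamming) distance of a linear code: least weight of a nonzero codeword. -/
noncomputable def minDist {n : ℕ} (C : Submodule F (Fin n → F)) : ℕ :=
  sInf {w | ∃ c ∈ C, c ≠ 0 ∧ hammingNorm c = w}

/-- Number of codewords of Hamming weight `w`. -/
noncomputable def weightCount {n : ℕ} (C : Submodule F (Fin n → F)) (w : ℕ) : ℕ :=
  Nat.card {c : C // hammingNorm (c : Fin n → F) = w}

section Aux
variable {E L : Type*} [Field E] [Fintype E] [DecidableEq E]
  [Field L] [Fintype L] [Algebra E L]



lemma aux_det_trans {a1 a2 b1 b2 c1 c2 : E} (hb : b1 ≠ 0 ∨ b2 ≠ 0)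
    (h1 : a1 * b2 - a2 * b1 = 0) (h2 : b1 * c2 - b2 * c1 = 0) :
    a1 * c2 - a2 * c1 = 0 := by
  rcases hb with hb | hb
  · have := mul_left_cancel₀ hb (show b1 * (a1 * c2) = b1 * (a2 * c1) by
      linear_combination a1 * h2 + c1 * h1)
    linear_combination this
  · have := mul_left_cancel₀ hb (show b2 * (a1 * c2) = b2 * (a2 * c1) by
      linear_combination c2 * h1 + a2 * h2)
    linear_combination this

/-- direction of a nonzero vector of `E × E`, as an element of `Option E`. -/
noncomputable def auxDir (v : E × E) : Option E :=
  if v.2 = 0 then none else some (v.1 * v.2⁻¹)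

lemma auxDir_eq_iff {v w : E × E} (hv : v ≠ 0) (hw : w ≠ 0) :
    auxDir v = auxDir w ↔ v.1 * w.2 - v.2 * w.1 = 0 := by
  have hv' : v.2 = 0 → v.1 ≠ 0 := by
    intro h2 h1; exact hv (Prod.ext h1 h2)
  have hw' : w.2 = 0 → w.1 ≠ 0 := by
    intro h2 h1; exact hw (Prod.ext h1 h2)
  unfold auxDir
  by_cases h2 : v.2 = 0 <;> by_cases h3 : w.2 = 0 <;>
    simp [h2, h3]
  · exact hv' h2
  · exact hw' h3
  · constructor
    · intro h
      field_simp at h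
      linear_combination h
    · intro h
      field_simp
      linear_combination h


lemma aux_pow (q n N : ℕ) (hF : Fintype.card E = q) (hq : 3 ≤ q)
    (hn : n * (q - 1) = N) (hN : 0 < N)
    (α : L) (hα : IsPrimitiveRoot α N)
    (i j : Fin n) (c : E) (hc : c ≠ 0)
    (h : algebraMap E L c * α ^ (i : ℕ) = α ^ (j : ℕ)) : i = j := by
  have hq1 : 0 < q - 1 := by omega
  have hcq : (algebraMap E L c) ^ (q - 1) = 1 := by
    rw [← map_pow]
    rw [show c ^ (q - 1) = 1 from by
      rw [← hF]; exact FiniteField.pow_card_sub_one_eq_one c hc]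
    exact map_one _
  have h2 : α ^ ((i : ℕ) * (q - 1)) = α ^ ((j : ℕ) * (q - 1)) := by
    have := congrArg (· ^ (q - 1)) h
    simp only [mul_pow, ← pow_mul, hcq, one_mul] at this
    exact this
  have hlt : ∀ l : Fin n, (l : ℕ) * (q - 1) < N := by
    intro l
    rw [← hn]
    exact (Nat.mul_lt_mul_right hq1).2 l.isLt
  have := hα.pow_inj (hlt i) (hlt j) h2
  exact Fin.ext (Nat.eq_of_mul_eq_mul_right hq1 this)

lemma aux_indep (q n N : ℕ) (hF : Fintype.card E = q) (hq : 3 ≤ q)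
    (hn : n * (q - 1) = N) (hN : 0 < N)
    (α : L) (hα : IsPrimitiveRoot α N)
    (a : Fin n → E) (ha : ∀ i, a i ≠ 0)
    (i j : Fin n) (hij : i ≠ j) (s t : E)
    (h : algebraMap E L s * (algebraMap E L (a i) * α ^ (i : ℕ))
       + algebraMap E L t * (algebraMap E L (a j) * α ^ (j : ℕ)) = 0) :
    s = 0 ∧ t = 0 := by
  have hα0 : α ≠ 0 := hα.ne_zero hN.ne'
  have hinj : Function.Injective (algebraMap E L) := (algebraMap E L).injective
  have hmap0 : ∀ x : E, algebraMap E L x = 0 → x = 0 := by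
    intro x hx; exact hinj (by simpa using hx)
  have key : s = 0 := by
    by_contra hs
    have ht : t ≠ 0 := by
      intro ht; subst ht
      simp only [map_zero, zero_mul, add_zero, mul_eq_zero, pow_eq_zero_iff', map_eq_zero] at h
      rcases h with h | h | h
      · exact hs h
      · exact ha i h
      · exact hα0 h.1
    -- derive α ^ j = algebraMap c * α ^ i
    have hta : algebraMap E L (t * a j) ≠ 0 := by
      simp only [ne_eq, map_eq_zero, mul_eq_zero, not_or]
      exact ⟨ht, ha j⟩
    have hstep : algebraMap E L (-(s * a i) / (t * a j)) * α ^ (i : ℕ) = α ^ (j : ℕ) := by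
      rw [map_div₀, map_neg, div_mul_eq_mul_div, div_eq_iff hta]
      push_cast [map_mul]
      linear_combination -h
    exact hij (aux_pow q n N hF hq hn hN α hα i j _
      (div_ne_zero (neg_ne_zero.2 (mul_ne_zero hs (ha i))) (mul_ne_zero ht (ha j))) hstep)
  subst key
  refine ⟨rfl, ?_⟩
  simp only [map_zero, zero_mul, zero_add, mul_eq_zero, map_eq_zero, pow_eq_zero_iff'] at h
  rcases h with h | h | h
  · exact h
  · exact absurd h (ha j)
  · exact absurd h.1 hα0

lemma aux_cover (q n N : ℕ) (hF : Fintype.card E = q) (hq : 3 ≤ q)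
    (hn : n * (q - 1) = N) (hN : 0 < N) (hKN : Fintype.card L = N + 1)
    (α : L) (hα : IsPrimitiveRoot α N)
    (a : Fin n → E) (ha : ∀ i, a i ≠ 0)
    (z : L) (hz : z ≠ 0) :
    ∃ (i : Fin n) (s : E), s ≠ 0 ∧ z = algebraMap E L s * (algebraMap E L (a i) * α ^ (i : ℕ)) := by
  have hq1 : 0 < q - 1 := by omega
  have hn0 : 0 < n := by
    rcases Nat.eq_zero_or_pos n with h | h
    · subst h; simp at hn; omega
    · exact h
  have hα0 : α ≠ 0 := hα.ne_zero hN.ne'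
  -- every nonzero element is a power of α
  have hzpow : ∃ e, e < N ∧ z = α ^ e := by
    classical
    set T : Finset L := (Finset.range N).image (α ^ ·) with hT
    have hTcard : T.card = N := by
      rw [hT, Finset.card_image_of_injOn, Finset.card_range]
      intro x hx y hy hxy
      exact hα.pow_inj (Finset.mem_range.1 hx) (Finset.mem_range.1 hy) hxy
    have hTsub : T ⊆ Finset.univ.erase 0 := by
      intro x hx
      rcases Finset.mem_image.1 hx with ⟨e, _, rfl⟩
      exact Finset.mem_erase.2 ⟨pow_ne_zero _ hα0, Finset.mem_univ _⟩
    have hTe : T = Finset.univ.erase 0 := by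
      apply Finset.eq_of_subset_of_card_le hTsub
      rw [hTcard, Finset.card_erase_of_mem (Finset.mem_univ _), Finset.card_univ, hKN]
      simp
    have : z ∈ T := by
      rw [hTe]; exact Finset.mem_erase.2 ⟨hz, Finset.mem_univ _⟩
    rcases Finset.mem_image.1 this with ⟨e, he, rfl⟩
    exact ⟨e, Finset.mem_range.1 he, rfl⟩
  obtain ⟨e, he, rfl⟩ := hzpow
  -- split e = n * (e / n) + e % n
  have hsplit : α ^ e = (α ^ n) ^ (e / n) * α ^ (e % n) := by
    rw [← pow_mul, ← pow_add, Nat.div_add_mod]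
  -- β := (α ^ n) ^ (e / n) is a (q-1)-st root of unity
  set β : L := (α ^ n) ^ (e / n) with hβ
  have hβ1 : β ^ (q - 1) = 1 := by
    rw [hβ, ← pow_mul, ← pow_mul]
    rw [hα.pow_eq_one_iff_dvd]
    exact ⟨e / n, by rw [← hn]; ring⟩
  -- the (q-1)-st roots of unity are exactly the nonzero elements of E
  have hroot : ∃ u : E, u ≠ 0 ∧ algebraMap E L u = β := by
    classical
    set R : Finset L := (Polynomial.nthRoots (q - 1) (1 : L)).toFinset with hR
    set Efs : Finset L := (Finset.univ.erase (0 : E)).image (algebraMap E L) with hE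
    have hEcard : Efs.card = q - 1 := by
      rw [hE, Finset.card_image_of_injective _ (algebraMap E L).injective,
        Finset.card_erase_of_mem (Finset.mem_univ _), Finset.card_univ, hF]
    have hEsub : Efs ⊆ R := by
      intro x hx
      rcases Finset.mem_image.1 hx with ⟨u, hu, rfl⟩
      have hu0 : u ≠ 0 := (Finset.mem_erase.1 hu).1
      rw [hR, Multiset.mem_toFinset, Polynomial.mem_nthRoots hq1]
      rw [← map_pow, ← hF]
      rw [FiniteField.pow_card_sub_one_eq_one u hu0, map_one]
    have hRE : R = Efs := by
      apply (Finset.eq_of_subset_of_card_le hEsub ?_).symm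
      calc R.card ≤ Multiset.card (Polynomial.nthRoots (q - 1) (1 : L)) :=
            Multiset.toFinset_card_le _
        _ ≤ q - 1 := Polynomial.card_nthRoots _ _
        _ = Efs.card := hEcard.symm
    have hβR : β ∈ R := by
      rw [hR, Multiset.mem_toFinset, Polynomial.mem_nthRoots hq1]
      exact hβ1
    rw [hRE, hE] at hβR
    rcases Finset.mem_image.1 hβR with ⟨u, hu, huβ⟩
    exact ⟨u, (Finset.mem_erase.1 hu).1, huβ⟩
  obtain ⟨u, hu0, huβ⟩ := hroot
  refine ⟨⟨e % n, Nat.mod_lt _ hn0⟩, u * (a ⟨e % n, Nat.mod_lt _ hn0⟩)⁻¹,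
    mul_ne_zero hu0 (inv_ne_zero (ha _)), ?_⟩
  rw [hsplit, ← huβ, map_mul, map_inv₀]
  field_simp [ha]


lemma UNUSED1' {a1 a2 b1 b2 c1 c2 : E} (hb : b1 ≠ 0 ∨ b2 ≠ 0)
    (h1 : a1 * b2 - a2 * b1 = 0) (h2 : b1 * c2 - b2 * c1 = 0) :
    a1 * c2 - a2 * c1 = 0 := by
  rcases hb with hb | hb
  · have := mul_left_cancel₀ hb (show b1 * (a1 * c2) = b1 * (a2 * c1) by
      linear_combination a1 * h2 + c1 * h1)
    linear_combination this
  · have := mul_left_cancel₀ hb (show b2 * (a1 * c2) = b2 * (a2 * c1) by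
      linear_combination c2 * h1 + a2 * h2)
    linear_combination this

lemma aux_scal {v1 v2 w1 w2 : E} (hv : v1 ≠ 0 ∨ v2 ≠ 0)
    (h : v1 * w2 - v2 * w1 = 0) : ∃ c, w1 = c * v1 ∧ w2 = c * v2 := by
  rcases hv with hv | hv
  · refine ⟨w1 / v1, by field_simp, ?_⟩
    field_simp
    linear_combination h
  · refine ⟨w2 / v2, ?_, by field_simp⟩
    field_simp
    linear_combination -h

lemma aux_triple (q n N : ℕ) (hF : Fintype.card E = q) (hq : 3 ≤ q) (hodd : Odd q)
    (hn : n * (q - 1) = N) (hN : 0 < N) (hKN : Fintype.card L = N + 1)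
    (hqn : q + 1 ≤ n)
    (α : L) (hα : IsPrimitiveRoot α N)
    (a : Fin n → E) (ha : ∀ i, a i ≠ 0) :
    ∃ (i j k : Fin n) (u v w : E), i ≠ j ∧ i ≠ k ∧ j ≠ k ∧
      u ≠ 0 ∧ v ≠ 0 ∧ w ≠ 0 ∧ u + v + w = 0 ∧
      algebraMap E L u * (algebraMap E L (a i) * α ^ (i : ℕ)) +
      algebraMap E L v * (algebraMap E L (a j) * α ^ (j : ℕ)) +
      algebraMap E L w * (algebraMap E L (a k) * α ^ (k : ℕ)) = 0 := by
  classical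
  by_contra hcon
  push_neg at hcon
  set φ := algebraMap E L with hφ
  have hα0 : α ≠ 0 := hα.ne_zero hN.ne'
  set B : Fin n → L := fun i => φ (a i) * α ^ (i : ℕ) with hB
  have hB0 : ∀ i, B i ≠ 0 := by
    intro i
    exact mul_ne_zero (by simp [hφ, ha i]) (pow_ne_zero _ hα0)
  have hindep : ∀ i j : Fin n, i ≠ j → ∀ s t : E,
      φ s * B i + φ t * B j = 0 → s = 0 ∧ t = 0 := by
    intro i j hij s t h
    exact aux_indep q n N hF hq hn hN α hα a ha i j hij s t h
  have hBne : ∀ i j : Fin n, i ≠ j → B i ≠ B j := by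
    intro i j hij h
    have := (hindep i j hij 1 (-1) (by
      simp only [map_one, map_neg, one_mul, neg_one_mul]
      rw [h]; ring)).1
    exact one_ne_zero this
  -- the contradiction hypothesis, reformulated
  have hcol : ∀ (i j k : Fin n) (s : E), i ≠ j → i ≠ k → j ≠ k →
      φ s * B i + φ (1 - s) * B j ≠ B k := by
    intro i j k s hij hik hjk h
    by_cases hs : s = 0
    · subst hs
      simp only [map_zero, zero_mul, zero_add, sub_zero, map_one, one_mul] at h
      exact hBne j k hjk h
    by_cases hs1 : s = 1
    · subst hs1
      simp only [sub_self, map_zero, zero_mul, add_zero, map_one, one_mul] at h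
      exact hBne i k hik h
    refine hcon i j k s (1 - s) (-1) hij hik hjk hs (sub_ne_zero.2 (Ne.symm hs1))
      (neg_ne_zero.2 one_ne_zero) (by ring) ?_
    rw [map_neg, map_one]
    linear_combination h
  -- two distinct indices
  have h2n : 2 ≤ n := by omega
  set i0 : Fin n := ⟨0, by omega⟩ with hi0
  set i1 : Fin n := ⟨1, by omega⟩ with hi1
  have hi01 : i0 ≠ i1 := by
    intro h
    simpa [hi0, hi1] using congrArg Fin.val h
  set pt : E × E → L := fun v => φ v.1 * B i0 + φ v.2 * B i1 with hpt
  have hptinj : Function.Injective pt := by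
    intro v w h
    have h' : φ (v.1 - w.1) * B i0 + φ (v.2 - w.2) * B i1 = 0 := by
      simp only [map_sub]
      simp only [hpt] at h
      linear_combination h
    obtain ⟨h1, h2⟩ := hindep i0 i1 hi01 _ _ h'
    exact Prod.ext (sub_eq_zero.1 h1) (sub_eq_zero.1 h2)
  have hpt0 : pt 0 = 0 := by simp [hpt]
  have hptne : ∀ v : E × E, v ≠ 0 → pt v ≠ 0 := by
    intro v hv h
    exact hv (hptinj (h.trans hpt0.symm))
  -- the set of coset representatives in the plane
  set S₀ : Finset (E × E) := Finset.univ.filter (fun v => ∃ i, pt v = B i) with hS₀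
  have hS₀ne : ∀ v ∈ S₀, v ≠ 0 := by
    intro v hv h
    obtain ⟨i, hi⟩ := (Finset.mem_filter.1 hv).2
    subst h
    rw [hpt0] at hi
    exact hB0 i hi.symm
  have hdirinj : ∀ v ∈ S₀, ∀ w ∈ S₀, auxDir v = auxDir w → v = w := by
    intro v hv w hw hdir
    obtain ⟨i, hiv⟩ := (Finset.mem_filter.1 hv).2
    obtain ⟨j, hjw⟩ := (Finset.mem_filter.1 hw).2
    have hv0 := hS₀ne v hv
    have hw0 := hS₀ne w hw
    have hdet : v.1 * w.2 - v.2 * w.1 = 0 := (auxDir_eq_iff hv0 hw0).1 hdir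
    have hv' : v.1 ≠ 0 ∨ v.2 ≠ 0 := by
      by_contra h
      push_neg at h
      exact hv0 (Prod.ext h.1 h.2)
    obtain ⟨c, hc1, hc2⟩ := aux_scal hv' hdet
    have hptw : pt w = φ c * pt v := by
      simp only [hpt]
      rw [hc1, hc2, map_mul, map_mul]
      ring
    have hBj : B j = φ c * B i := by rw [← hiv, ← hjw, hptw]
    have hc0 : c ≠ 0 := by
      intro h
      subst h
      simp only [map_zero, zero_mul] at hBj
      exact hB0 j hBj
    by_cases hij : i = j
    · subst hij
      have : φ c = 1 := by
        have h1 : (φ c - 1) * B i = 0 := by linear_combination -hBj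
        rcases mul_eq_zero.1 h1 with h | h
        · exact sub_eq_zero.1 h
        · exact absurd h (hB0 i)
      have : c = 1 := (algebraMap E L).injective (by rw [this, map_one])
      subst this
      simp only [one_mul] at hc1 hc2
      exact Prod.ext hc1.symm hc2.symm
    · exfalso
      have := (hindep i j hij c (-1) (by
        rw [map_neg, map_one]
        linear_combination -hBj)).1
      exact hc0 this
  have hdirsurj : ∀ d : Option E, ∃ v ∈ S₀, auxDir v = d := by
    intro d
    set vd : E × E := d.elim (1, 0) (fun c => (c, 1)) with hvd
    have hvd0 : vd ≠ 0 := by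
      cases d <;> simp [hvd, Prod.ext_iff]
    have hvddir : auxDir vd = d := by
      cases d <;> simp [hvd, auxDir]
    obtain ⟨i, s, hs, hptvd⟩ := aux_cover q n N hF hq hn hN hKN α hα a ha (pt vd)
      (hptne vd hvd0)
    set v : E × E := (s⁻¹ * vd.1, s⁻¹ * vd.2) with hv
    have hv0 : v ≠ 0 := by
      intro h
      apply hvd0
      have h1 : s⁻¹ * vd.1 = 0 := congrArg Prod.fst h
      have h2 : s⁻¹ * vd.2 = 0 := congrArg Prod.snd h
      have hsi : s⁻¹ ≠ 0 := inv_ne_zero hs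
      exact Prod.ext (by rcases mul_eq_zero.1 h1 with h | h; exact absurd h hsi; exact h)
        (by rcases mul_eq_zero.1 h2 with h | h; exact absurd h hsi; exact h)
    have hptv : pt v = B i := by
      have : pt v = φ s⁻¹ * pt vd := by
        simp only [hpt, hv, map_mul]
        ring
      rw [this, hptvd, ← mul_assoc, ← map_mul, inv_mul_cancel₀ hs, map_one, one_mul]
    refine ⟨v, Finset.mem_filter.2 ⟨Finset.mem_univ _, ⟨i, hptv⟩⟩, ?_⟩
    rw [← hvddir]
    apply (auxDir_eq_iff hv0 hvd0).2
    simp only [hv]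
    ring
  have hS₀card : S₀.card = q + 1 := by
    have := Finset.card_bij (fun v (_ : v ∈ S₀) => auxDir v)
      (fun v hv => Finset.mem_univ (auxDir v))
      (fun v hv w hw h => hdirinj v hv w hw h)
      (fun d _ => by
        obtain ⟨v, hv, hd⟩ := hdirsurj d
        exact ⟨v, hv, hd⟩)
    rw [this, Finset.card_univ, Fintype.card_option, hF]
  set S : Finset (E × E) := insert 0 S₀ with hS
  have h0S₀ : (0 : E × E) ∉ S₀ := fun h => hS₀ne 0 h rfl
  have hScard : S.card = q + 2 := by
    rw [hS, Finset.card_insert_of_notMem h0S₀, hS₀card]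
  have hmemS : ∀ v ∈ S, v = 0 ∨ v ∈ S₀ := by
    intro v hv
    rcases Finset.mem_insert.1 hv with h | h
    · exact Or.inl h
    · exact Or.inr h
  have hncol : ∀ p ∈ S, ∀ r ∈ S, ∀ t ∈ S, p ≠ r → p ≠ t → r ≠ t →
      (r.1 - p.1) * (t.2 - p.2) - (r.2 - p.2) * (t.1 - p.1) ≠ 0 := by
    intro p hp r hr t ht hpr hpt' hrt h
    rcases hmemS p hp with rfl | hp0
    · have hr0 : r ∈ S₀ := (hmemS r hr).resolve_left (fun h' => hpr h'.symm)
      have ht0 : t ∈ S₀ := (hmemS t ht).resolve_left (fun h' => hpt' h'.symm)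
      apply hrt
      apply hdirinj r hr0 t ht0
      apply (auxDir_eq_iff (hS₀ne r hr0) (hS₀ne t ht0)).2
      simp only [Prod.fst_zero, Prod.snd_zero, sub_zero] at h
      linear_combination h
    rcases hmemS r hr with rfl | hr0
    · have ht0 : t ∈ S₀ := (hmemS t ht).resolve_left (fun h' => hrt h'.symm)
      apply hpt'
      apply hdirinj p hp0 t ht0
      apply (auxDir_eq_iff (hS₀ne p hp0) (hS₀ne t ht0)).2
      simp only [Prod.fst_zero, Prod.snd_zero, zero_sub] at h
      linear_combination -h
    rcases hmemS t ht with rfl | ht0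
    · apply hpr
      apply hdirinj p hp0 r hr0
      apply (auxDir_eq_iff (hS₀ne p hp0) (hS₀ne r hr0)).2
      simp only [Prod.fst_zero, Prod.snd_zero, zero_sub] at h
      linear_combination h
    obtain ⟨i, hip⟩ := (Finset.mem_filter.1 hp0).2
    obtain ⟨j, hjr⟩ := (Finset.mem_filter.1 hr0).2
    obtain ⟨k, hkt⟩ := (Finset.mem_filter.1 ht0).2
    have hij : i ≠ j := fun hh => hpr (hptinj (by rw [hip, hjr, hh]))
    have hik : i ≠ k := fun hh => hpt' (hptinj (by rw [hip, hkt, hh]))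
    have hjk : j ≠ k := fun hh => hrt (hptinj (by rw [hjr, hkt, hh]))
    have hrp : r.1 - p.1 ≠ 0 ∨ r.2 - p.2 ≠ 0 := by
      by_contra hh
      push_neg at hh
      exact hpr (Prod.ext (sub_eq_zero.1 hh.1).symm (sub_eq_zero.1 hh.2).symm)
    obtain ⟨c, hc1, hc2⟩ := aux_scal hrp h
    have e1 : φ t.1 = φ p.1 + φ c * (φ r.1 - φ p.1) := by
      rw [show t.1 = p.1 + c * (r.1 - p.1) by linear_combination hc1]
      simp only [map_add, map_mul, map_sub]
    have e2 : φ t.2 = φ p.2 + φ c * (φ r.2 - φ p.2) := by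
      rw [show t.2 = p.2 + c * (r.2 - p.2) by linear_combination hc2]
      simp only [map_add, map_mul, map_sub]
    have hptt : pt t = φ (1 - c) * pt p + φ c * pt r := by
      simp only [hpt, map_sub, map_one]
      linear_combination (B i0) * e1 + (B i1) * e2
    have hBk : B k = φ (1 - c) * B i + φ c * B j := by
      rw [← hip, ← hjr, ← hkt, hptt]
    exact hcol i j k (1 - c) hij hik hjk (by rw [sub_sub_cancel]; exact hBk.symm)
  have hxex : ∃ x : E × E, x ∉ S := by
    by_contra hh
    push_neg at hh
    have hsub : (Finset.univ : Finset (E × E)) ⊆ S := fun y _ => hh y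
    have hcard := Finset.card_le_card hsub
    rw [Finset.card_univ, Fintype.card_prod, hF, hScard] at hcard
    nlinarith
  obtain ⟨x, hx⟩ := hxex
  have hxS : ∀ s ∈ S, x ≠ s := fun s hs h => hx (h ▸ hs)
  have hpair : ∀ s ∈ S, ∃! t : E × E, t ∈ S ∧ t ≠ s ∧
      (s.1 - x.1) * (t.2 - x.2) - (s.2 - x.2) * (t.1 - x.1) = 0 := by
    intro s hs
    have hinj2 : ∀ (t₁ t₂ : E × E), t₁ ∈ S.erase s → t₂ ∈ S.erase s →
        auxDir (t₁.1 - s.1, t₁.2 - s.2) = auxDir (t₂.1 - s.1, t₂.2 - s.2) → t₁ = t₂ := by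
      intro t₁ t₂ ht₁ ht₂ hd
      by_contra hne
      have h1 := Finset.mem_erase.1 ht₁
      have h2 := Finset.mem_erase.1 ht₂
      have hn1 : ((t₁.1 - s.1, t₁.2 - s.2) : E × E) ≠ 0 := by
        intro hh
        exact h1.1 (Prod.ext (sub_eq_zero.1 (congrArg Prod.fst hh))
          (sub_eq_zero.1 (congrArg Prod.snd hh)))
      have hn2 : ((t₂.1 - s.1, t₂.2 - s.2) : E × E) ≠ 0 := by
        intro hh
        exact h2.1 (Prod.ext (sub_eq_zero.1 (congrArg Prod.fst hh))
          (sub_eq_zero.1 (congrArg Prod.snd hh)))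
      have hdet := (auxDir_eq_iff hn1 hn2).1 hd
      exact hncol s hs t₁ h1.2 t₂ h2.2 (Ne.symm h1.1) (Ne.symm h2.1) hne hdet
    have hcard2 : (Finset.univ : Finset (Option E)).card ≤ (S.erase s).card := by
      rw [Finset.card_erase_of_mem hs, hScard, Finset.card_univ, Fintype.card_option, hF]
      omega
    obtain ⟨t, ht, hdt⟩ := Finset.surj_on_of_inj_on_of_card_le
      (fun t (_ : t ∈ S.erase s) => auxDir (t.1 - s.1, t.2 - s.2))
      (fun t _ => Finset.mem_univ _) hinj2 hcard2
      (auxDir (x.1 - s.1, x.2 - s.2)) (Finset.mem_univ _)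
    have hts := Finset.mem_erase.1 ht
    have hxs0 : ((x.1 - s.1, x.2 - s.2) : E × E) ≠ 0 := by
      intro hh
      exact hxS s hs (Prod.ext (sub_eq_zero.1 (congrArg Prod.fst hh))
        (sub_eq_zero.1 (congrArg Prod.snd hh)))
    have hts0 : ((t.1 - s.1, t.2 - s.2) : E × E) ≠ 0 := by
      intro hh
      exact hts.1 (Prod.ext (sub_eq_zero.1 (congrArg Prod.fst hh))
        (sub_eq_zero.1 (congrArg Prod.snd hh)))
    have hdet := (auxDir_eq_iff hxs0 hts0).1 hdt
    have hG : (s.1 - x.1) * (t.2 - x.2) - (s.2 - x.2) * (t.1 - x.1) = 0 := by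
      linear_combination -hdet
    refine ⟨t, ⟨hts.2, hts.1, hG⟩, ?_⟩
    rintro t' ⟨ht'S, ht's, hdet'⟩
    by_contra hne
    have hsx : s.1 - x.1 ≠ 0 ∨ s.2 - x.2 ≠ 0 := by
      by_contra hh
      push_neg at hh
      exact hxS s hs (Prod.ext (sub_eq_zero.1 hh.1).symm (sub_eq_zero.1 hh.2).symm)
    have hdet3 : (t'.1 - x.1) * (t.2 - x.2) - (t'.2 - x.2) * (t.1 - x.1) = 0 :=
      aux_det_trans hsx (by linear_combination -hdet') (by linear_combination hG)
    have hΞ : (t'.1 - s.1) * (t.2 - s.2) - (t'.2 - s.2) * (t.1 - s.1) = 0 := by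
      linear_combination hdet3 + hdet' - hG
    exact hncol s hs t' ht'S t hts.2 (Ne.symm ht's) (Ne.symm hts.1) hne hΞ
  set f : E × E → E × E := fun s =>
    if h : ∃ t, t ∈ S ∧ t ≠ s ∧
      (s.1 - x.1) * (t.2 - x.2) - (s.2 - x.2) * (t.1 - x.1) = 0
    then h.choose else s with hf
  have hfspec : ∀ s ∈ S, f s ∈ S ∧ f s ≠ s ∧
      (s.1 - x.1) * ((f s).2 - x.2) - (s.2 - x.2) * ((f s).1 - x.1) = 0 := by
    intro s hs
    have h : ∃ t, t ∈ S ∧ t ≠ s ∧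
        (s.1 - x.1) * (t.2 - x.2) - (s.2 - x.2) * (t.1 - x.1) = 0 := by
      obtain ⟨t, ht, _⟩ := hpair s hs
      exact ⟨t, ht⟩
    simp only [hf, dif_pos h]
    exact h.choose_spec
  have hfuniq : ∀ s ∈ S, ∀ t, t ∈ S → t ≠ s →
      (s.1 - x.1) * (t.2 - x.2) - (s.2 - x.2) * (t.1 - x.1) = 0 → t = f s := by
    intro s hs t ht hts hdet
    obtain ⟨t₀, ht₀, huniq⟩ := hpair s hs
    have e1 := huniq t ⟨ht, hts, hdet⟩
    have e2 := huniq (f s) (hfspec s hs)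
    rw [e1, e2]
  have hff : ∀ s ∈ S, f (f s) = s := by
    intro s hs
    obtain ⟨hfS, hfne, hdet⟩ := hfspec s hs
    exact (hfuniq (f s) hfS s hs (Ne.symm hfne) (by linear_combination -hdet)).symm
  set g : E × E → Finset (E × E) := fun s => {s, f s} with hg
  have hSsum : S.card = ∑ A ∈ S.image g, (S.filter (fun s => g s = A)).card :=
    Finset.card_eq_sum_card_fiberwise (fun s hs => Finset.mem_image_of_mem g hs)
  have hfib : ∀ A ∈ S.image g, (S.filter (fun s => g s = A)).card = 2 := by
    intro A hA
    obtain ⟨s₀, hs₀, rfl⟩ := Finset.mem_image.1 hA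
    obtain ⟨hfS₀, hfne₀, _⟩ := hfspec s₀ hs₀
    have heq : S.filter (fun s => g s = g s₀) = {s₀, f s₀} := by
      apply Finset.Subset.antisymm
      · intro t htf
        obtain ⟨htS, hgt⟩ := Finset.mem_filter.1 htf
        have hmem : t ∈ g t := by
          simp only [hg]
          exact Finset.mem_insert_self _ _
        rw [hgt] at hmem
        simpa only [hg] using hmem
      · intro t htm
        rcases Finset.mem_insert.1 htm with rfl | htm
        · exact Finset.mem_filter.2 ⟨hs₀, rfl⟩
        · rw [Finset.mem_singleton] at htm
          subst htm
          refine Finset.mem_filter.2 ⟨hfS₀, ?_⟩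
          simp only [hg]
          rw [hff s₀ hs₀]
          exact Finset.pair_comm _ _
    rw [heq, Finset.card_pair (Ne.symm hfne₀)]
  have hEven : S.card = 2 * (S.image g).card := by
    rw [hSsum, Finset.sum_congr rfl hfib, Finset.sum_const, smul_eq_mul, mul_comm]
  rw [hScard] at hEven
  obtain ⟨c, hc⟩ := hodd
  omega

end Aux

/-- for `q` odd and `m ≥ 2` even, the standardly extended code of
any Hamming code `Ham(q,m,a)` has minimum distance exactly `3`. -/
theorem stmt16 {F K : Type*} [Field F] [Fintype F] [DecidableEq F]
    [Field K] [Fintype K] [Algebra F K]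
    (q m n : ℕ) (hF : Fintype.card F = q) (hodd : Odd q)
    (hm : 2 ≤ m) (hme : Even m)
    (hK : Fintype.card K = q ^ m) (hn : n * (q - 1) = q ^ m - 1)
    (α : K) (hα : IsPrimitiveRoot α (q ^ m - 1))
    (a : Fin n → F) (ha : ∀ i, a i ≠ 0)
    (C : Submodule F (Fin n → F))
    (hC : ∀ c, c ∈ C ↔ ∑ i, algebraMap F K (a i * c i) * α ^ (i : ℕ) = 0) :
    minDist (extCode C (fun _ => -1)) = 3 := by
  classical
  have hq2 : 1 < q := hF ▸ Fintype.one_lt_card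
  have hq : 3 ≤ q := by obtain ⟨c, hc⟩ := hodd; omega
  have hm0 : m ≠ 0 := by omega
  have hN : 0 < q ^ m - 1 := by
    have : 1 < q ^ m := Nat.one_lt_pow hm0 (by omega)
    omega
  have hKN : Fintype.card K = (q ^ m - 1) + 1 := by
    have h1 : 1 ≤ q ^ m := Nat.one_le_pow _ _ (by omega)
    rw [hK]; omega
  have hqm2 : q ^ 2 ≤ q ^ m := Nat.pow_le_pow_right (by omega) hm
  have hqn : q + 1 ≤ n := by
    by_contra hh
    push_neg at hh
    have h1 : n * (q - 1) ≤ q * (q - 1) := Nat.mul_le_mul_right _ (by omega)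
    have h2 : q * (q - 1) + q = q * q := by
      rw [← Nat.mul_succ]; congr 1; omega
    have h3 : q * q = q ^ 2 := (sq q).symm
    omega
  have hmemE : ∀ z : Fin (n + 1) → F, z ∈ extCode C (fun _ => -1) ↔
      ((fun i => z i.castSucc) ∈ C ∧ z (Fin.last n) = ∑ i : Fin n, (-1 : F) * z i.castSucc) :=
    fun z => Iff.rfl
  obtain ⟨i, j, k, u, v, w, hij, hik, hjk, hu, hv, hw, hsum, hrel⟩ :=
    aux_triple q n (q ^ m - 1) hF hq hodd hn hN hKN hqn α hα a ha
  -- construct the weight-3 extended codeword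
  set y : Fin n → F := fun l => if l = i then u else if l = j then v else
    if l = k then w else 0 with hy
  have hyi : y i = u := by simp [hy]
  have hyj : y j = v := by simp [hy, Ne.symm hij]
  have hyk : y k = w := by simp [hy, Ne.symm hik, Ne.symm hjk]
  have hsupp : ∀ l : Fin n, l ∉ ({i, j, k} : Finset (Fin n)) → y l = 0 := by
    intro l hl
    simp only [Finset.mem_insert, Finset.mem_singleton, not_or] at hl
    simp only [hy, if_neg hl.1, if_neg hl.2.1, if_neg hl.2.2]
  have hjk' : j ∉ ({k} : Finset (Fin n)) := by simp [hjk]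
  have hik' : i ∉ ({j, k} : Finset (Fin n)) := by simp [hij, hik]
  have hsum1 : ∑ l, algebraMap F K (a l * y l) * α ^ (l : ℕ) = 0 := by
    rw [← Finset.sum_subset (Finset.subset_univ ({i, j, k} : Finset (Fin n)))
      (fun l _ hl => by rw [hsupp l hl, mul_zero, map_zero, zero_mul])]
    rw [Finset.sum_insert hik', Finset.sum_insert hjk', Finset.sum_singleton]
    rw [hyi, hyj, hyk, map_mul, map_mul, map_mul]
    linear_combination hrel
  have hsum2 : ∑ l, y l = 0 := by
    rw [← Finset.sum_subset (Finset.subset_univ ({i, j, k} : Finset (Fin n)))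
      (fun l _ hl => hsupp l hl)]
    rw [Finset.sum_insert hik', Finset.sum_insert hjk', Finset.sum_singleton,
      hyi, hyj, hyk]
    linear_combination hsum
  set xw : Fin (n + 1) → F := Fin.snoc y 0 with hxw
  have hxcast : ∀ l : Fin n, xw l.castSucc = y l := fun l => Fin.snoc_castSucc _ _ _
  have hxlast : xw (Fin.last n) = 0 := Fin.snoc_last _ _
  have hxE : xw ∈ extCode C (fun _ => -1) := by
    rw [hmemE]
    constructor
    · rw [show (fun l : Fin n => xw l.castSucc) = y from funext hxcast, hC]
      exact hsum1
    · rw [hxlast]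
      have he : ∑ l : Fin n, (-1 : F) * xw l.castSucc = -∑ l : Fin n, y l := by
        simp [hxcast, neg_one_mul]
      rw [he, hsum2, neg_zero]
  have hxne : xw ≠ 0 := by
    intro hh
    have h0 := congrFun hh i.castSucc
    rw [hxcast i, hyi] at h0
    exact hu h0
  have hlastne : ∀ l : Fin n, Fin.last n ≠ Fin.castSucc l := by
    intro l h
    have := Fin.castSucc_lt_last l
    rw [← h] at this
    exact lt_irrefl _ this
  have hwt : hammingNorm xw = 3 := by
    have hfilter : Finset.univ.filter (fun t => xw t ≠ 0)
        = {Fin.castSucc i, Fin.castSucc j, Fin.castSucc k} := by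
      ext t
      simp only [Finset.mem_filter, Finset.mem_univ, true_and, Finset.mem_insert,
        Finset.mem_singleton]
      refine Fin.lastCases ?_ (fun l => ?_) t
      · constructor
        · intro hh; exact absurd hxlast hh
        · rintro (hh | hh | hh)
          · exact absurd hh (hlastne i)
          · exact absurd hh (hlastne j)
          · exact absurd hh (hlastne k)
      · simp only [hxcast, Fin.castSucc_inj]
        by_cases h1 : l = i
        · subst h1; simp [hyi, hu]
        by_cases h2 : l = j
        · subst h2; simp [hyj, hv]
        by_cases h3 : l = k
        · subst h3; simp [hyk, hw]
        · have : y l = 0 := hsupp l (by simp [h1, h2, h3])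
          simp [this, h1, h2, h3]
    have h1 : Fin.castSucc j ∉ ({Fin.castSucc k} : Finset (Fin (n + 1))) := by
      simp [Fin.castSucc_inj, hjk]
    have h2 : Fin.castSucc i ∉ ({Fin.castSucc j, Fin.castSucc k} : Finset (Fin (n + 1))) := by
      simp [Fin.castSucc_inj, hij, hik]
    show (Finset.univ.filter (fun t => xw t ≠ 0)).card = 3
    rw [hfilter, Finset.card_insert_of_notMem h2, Finset.card_insert_of_notMem h1,
      Finset.card_singleton]
  have hmem3 : (3 : ℕ) ∈ {w | ∃ c ∈ extCode C (fun _ => -1), c ≠ 0 ∧ hammingNorm c = w} :=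
    ⟨xw, hxE, hxne, hwt⟩
  have hlb : ∀ w' ∈ {w | ∃ c ∈ extCode C (fun _ => -1), c ≠ 0 ∧ hammingNorm c = w},
      3 ≤ w' := by
    rintro w' ⟨z, hzE, hz0, rfl⟩
    obtain ⟨hzC, hzlast⟩ := (hmemE z).1 hzE
    set yz : Fin n → F := fun l => z l.castSucc with hyz
    have hyz0 : yz ≠ 0 := by
      intro hh
      apply hz0
      funext t
      refine Fin.lastCases ?_ (fun l => ?_) t
      · rw [hzlast]
        have : ∀ l : Fin n, z l.castSucc = 0 := fun l => congrFun hh l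
        simp [this]
      · exact congrFun hh l
    have hyzC : yz ∈ C := hzC
    have h3y : 3 ≤ hammingNorm yz := by
      by_contra hcontra
      push_neg at hcontra
      have hcard : (Finset.univ.filter (fun l => yz l ≠ 0)).card ≤ 2 := by
        have : hammingNorm yz = (Finset.univ.filter (fun l => yz l ≠ 0)).card := rfl
        omega
      set s := Finset.univ.filter (fun l => yz l ≠ 0) with hsdef
      have hmem_s : ∀ l : Fin n, l ∉ s → yz l = 0 := by
        intro l hl
        by_contra hne
        exact hl (Finset.mem_filter.2 ⟨Finset.mem_univ _, hne⟩)
      have hsum' : ∑ l ∈ s, algebraMap F K (a l * yz l) * α ^ (l : ℕ) = 0 := by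
        rw [Finset.sum_subset (Finset.subset_univ s)
          (fun l _ hl => by rw [hmem_s l hl, mul_zero, map_zero, zero_mul])]
        rw [← hC]
        exact hyzC
      have hne_s : s.Nonempty := by
        rcases Finset.eq_empty_or_nonempty s with h | h
        · exfalso
          apply hyz0
          funext l
          exact hmem_s l (h ▸ Finset.notMem_empty l)
        · exact h
      have hα0 : α ≠ 0 := hα.ne_zero hN.ne'
      have h0 : s.card ≠ 0 := by
        intro h0
        exact absurd (Finset.card_eq_zero.1 h0) (Finset.nonempty_iff_ne_empty.1 hne_s)
      have hcases : s.card = 1 ∨ s.card = 2 := by omega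
      rcases hcases with hc1 | hc2
      · obtain ⟨l0, hl0⟩ := Finset.card_eq_one.1 hc1
        rw [hl0, Finset.sum_singleton] at hsum'
        have hl0s : l0 ∈ s := by rw [hl0]; exact Finset.mem_singleton_self _
        apply (Finset.mem_filter.1 hl0s).2
        have h1 : algebraMap F K (a l0 * yz l0) = 0 := by
          rcases mul_eq_zero.1 hsum' with h | h
          · exact h
          · exact absurd h (pow_ne_zero _ hα0)
        have h2 : a l0 * yz l0 = 0 := by
          apply (algebraMap F K).injective
          rw [h1, map_zero]
        rcases mul_eq_zero.1 h2 with h | h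
        · exact absurd h (ha l0)
        · exact h
      · obtain ⟨l1, l2, hl12, hl2⟩ := Finset.card_eq_two.1 hc2
        rw [hl2, Finset.sum_insert (by simp [hl12]), Finset.sum_singleton] at hsum'
        have hl1s : l1 ∈ s := by rw [hl2]; simp
        have hl2s : l2 ∈ s := by rw [hl2]; simp
        rw [map_mul, map_mul] at hsum'
        have hrel2 : algebraMap F K (yz l1) * (algebraMap F K (a l1) * α ^ (l1 : ℕ))
            + algebraMap F K (yz l2) * (algebraMap F K (a l2) * α ^ (l2 : ℕ)) = 0 := by
          linear_combination hsum'
        obtain ⟨hz1, hz2⟩ := aux_indep q n (q ^ m - 1) hF hq hn hN α hα a ha l1 l2 hl12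
          (yz l1) (yz l2) hrel2
        exact (Finset.mem_filter.1 hl1s).2 hz1
    calc (3 : ℕ) ≤ hammingNorm yz := h3y
      _ ≤ hammingNorm z := by
        apply Finset.card_le_card_of_injOn Fin.castSucc
        · intro l hl
          simp only [Finset.mem_coe, Finset.mem_filter, Finset.mem_univ, true_and] at hl ⊢
          exact hl
        · exact (Fin.castSucc_injective n).injOn
  apply le_antisymm
  · exact Nat.sInf_le hmem3
  · exact le_csInf ⟨3, hmem3⟩ hlb
end

section
/- Let q > 2 be a prime power, m ≥ 2, n = (q^m-1)/(q-1), and a ∈ (GF(q)*)^n with a ∉ Ham(q,m,1). Then the standardly extended Simplex code Sim(q,m,a)̄(-1) has parameters [(q^m+q-2)/(q-1), m, q^{m-1}] with weight enumerator 1 + (q^{m-1}-1) z^{q^{m-1}} + q^{m-1}(q-1) z^{q^{m-1}+1}, and its dual has parameters [(q^m+q-2)/(q-1), (q^m+q-2)/(q-1) - m, 2]. -/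
open Finset

variable {F : Type*} [Field F] [Fintype F] [DecidableEq F]

section Helpers
open Module

lemma hammingNorm_split {G : Type*} [DecidableEq G] [Zero G] {n : ℕ} (x : Fin (n+1) → G) :
    hammingNorm x
      = hammingNorm (fun i : Fin n => x i.castSucc) + (if x (Fin.last n) = 0 then 0 else 1) := by
  unfold hammingNorm
  rw [Finset.card_filter, Finset.card_filter, Fin.sum_univ_castSucc]
  congr 1
  rcases eq_or_ne (x (Fin.last n)) 0 with h | h <;> simp [h]

lemma finrank_ker_add_one {V : Type*} [AddCommGroup V] [Module F V] [FiniteDimensional F V]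
    (f : V →ₗ[F] F) (hf : f ≠ 0) :
    finrank F (LinearMap.ker f) + 1 = finrank F V := by
  obtain ⟨x, hx⟩ : ∃ x, f x ≠ 0 := by
    by_contra h'; push_neg at h'
    exact hf (LinearMap.ext fun x => by simp [h' x])
  have hr : LinearMap.range f = ⊤ := by
    rw [eq_top_iff]
    rintro y -
    exact ⟨(y * (f x)⁻¹) • x, by rw [map_smul, smul_eq_mul, mul_assoc, inv_mul_cancel₀ hx, mul_one]⟩
  have h := LinearMap.finrank_range_add_finrank_ker f
  rw [hr, finrank_top, finrank_self] at h
  omega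

lemma exists_algebraMap_eq {K : Type*} [Field K] [Fintype K] [Algebra F K]
    (y : K) (hy : y ^ (Fintype.card F) = y) : ∃ u : F, algebraMap F K u = y := by
  classical
  set q := Fintype.card F with hqdef
  have hq2 : 1 < q := Fintype.one_lt_card
  set p : Polynomial K := Polynomial.X ^ q - Polynomial.X with hp
  have hdeg : p.natDegree ≤ q := by
    refine le_trans (Polynomial.natDegree_sub_le _ _) ?_
    simp only [Polynomial.natDegree_X_pow, Polynomial.natDegree_X]
    omega
  have hpne : p ≠ 0 := by
    intro h
    have h2 := congrArg (fun r => Polynomial.coeff r q) h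
    simp only [hp, Polynomial.coeff_sub, Polynomial.coeff_X_pow, if_pos rfl,
      Polynomial.coeff_X_of_ne_one (by omega : q ≠ 1), Polynomial.coeff_zero, sub_zero] at h2
    exact one_ne_zero h2
  have hroot : ∀ z : K, z ^ q = z → z ∈ p.roots.toFinset := by
    intro z hz
    rw [Multiset.mem_toFinset, Polynomial.mem_roots hpne]
    simp [hp, Polynomial.IsRoot, hz]
  set T : Finset K := Finset.image (algebraMap F K) Finset.univ with hT
  have hcardT : T.card = q := by
    rw [hT, Finset.card_image_of_injective _ (algebraMap F K).injective, Finset.card_univ]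
  have hTsub : T ⊆ p.roots.toFinset := by
    intro z hz
    rw [hT, Finset.mem_image] at hz
    obtain ⟨u, -, rfl⟩ := hz
    refine hroot _ ?_
    rw [← map_pow, FiniteField.pow_card]
  by_contra hne
  push_neg at hne
  have hyT : y ∉ T := by
    intro h
    rw [hT, Finset.mem_image] at h
    obtain ⟨u, -, hu⟩ := h
    exact hne u hu
  have hsub : insert y T ⊆ p.roots.toFinset := by
    intro z hz
    rcases Finset.mem_insert.mp hz with rfl | hz
    · exact hroot _ hy
    · exact hTsub hz
  have hco : (insert y T).card = q + 1 := by
    rw [Finset.card_insert_of_notMem hyT, hcardT]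
  have := Finset.card_le_card hsub
  have h2 := Multiset.toFinset_card_le p.roots
  have h3 := Polynomial.card_roots' p
  omega

lemma exists_pow_eq {K : Type*} [Field K] [Fintype K]
    (α : K) (hα : IsPrimitiveRoot α (Fintype.card K - 1)) (x : K) (hx : x ≠ 0) :
    ∃ k : ℕ, α ^ k = x := by
  classical
  have h1 : 1 < Fintype.card K := Fintype.one_lt_card
  have hpos : 0 < Fintype.card K - 1 := by omega
  have hu := hα.isUnit hpos.ne'
  have hα' : IsPrimitiveRoot hu.unit (Fintype.card K - 1) := hα.isUnit_unit hpos.ne'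
  have horder : orderOf hu.unit = Fintype.card K - 1 := hα'.eq_orderOf.symm
  have htop : Subgroup.zpowers hu.unit = ⊤ := by
    apply Subgroup.eq_top_of_card_eq
    rw [Nat.card_zpowers, horder, Nat.card_eq_fintype_card, Fintype.card_units]
  have hxu : (isUnit_iff_ne_zero.mpr hx).unit ∈ Subgroup.zpowers hu.unit := by
    rw [htop]; trivial
  obtain ⟨k, hk⟩ := (isOfFinOrder_of_finite hu.unit).mem_powers_iff_mem_zpowers.mpr hxu
  refine ⟨k, ?_⟩
  have := congrArg (Units.val) hk
  simpa using this

lemma nat_card_subtype_compl {α : Type*} [Finite α] (p : α → Prop) :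
    Nat.card {x // ¬ p x} = Nat.card α - Nat.card {x // p x} := by
  classical
  haveI := Fintype.ofFinite α
  rw [Nat.card_eq_fintype_card, Nat.card_eq_fintype_card, Nat.card_eq_fintype_card,
    Fintype.card_subtype_compl]

lemma mem_dualCode {N : ℕ} (C : Submodule F (Fin N → F)) (x : Fin N → F) :
    x ∈ dualCode C ↔ ∀ c ∈ C, ∑ i, x i * c i = 0 := Iff.rfl

lemma mem_extCode {n : ℕ} (C : Submodule F (Fin n → F)) (u : Fin n → F) (x : Fin (n+1) → F) :
    x ∈ extCode C u
      ↔ (fun i => x i.castSucc) ∈ C ∧ x (Fin.last n) = ∑ i, u i * x i.castSucc := Iff.rfl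

lemma finrank_dualCode_add {N : ℕ} (C : Submodule F (Fin N → F)) :
    finrank F (dualCode C) + finrank F C = N := by
  classical
  let Φ : (Fin N → F) →ₗ[F] Module.Dual F C :=
    { toFun := fun x =>
        { toFun := fun c => ∑ i, x i * (c : Fin N → F) i
          map_add' := by
            intro c d
            simp only [Submodule.coe_add, Pi.add_apply, mul_add, Finset.sum_add_distrib]
          map_smul' := by
            intro r c
            simp only [SetLike.val_smul, Pi.smul_apply, smul_eq_mul, RingHom.id_apply,
              Finset.mul_sum]
            exact Finset.sum_congr rfl fun i _ => by ring }
      map_add' := by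
        intro x y
        ext c
        simp only [Pi.add_apply, add_mul, Finset.sum_add_distrib, LinearMap.coe_mk,
          AddHom.coe_mk, LinearMap.add_apply]
      map_smul' := by
        intro r x
        ext c
        simp only [Pi.smul_apply, smul_eq_mul, RingHom.id_apply, LinearMap.coe_mk,
          AddHom.coe_mk, LinearMap.smul_apply, Finset.mul_sum]
        exact Finset.sum_congr rfl fun i _ => by ring }
  have hker : LinearMap.ker Φ = dualCode C := by
    ext x
    rw [LinearMap.mem_ker, mem_dualCode]
    constructor
    · intro h c hc
      have := congrArg (fun f => f ⟨c, hc⟩) (h : Φ x = 0)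
      simpa [Φ] using this
    · intro h
      ext c
      simpa [Φ] using h c c.2
  have hsurj : Function.Surjective Φ := by
    intro f
    obtain ⟨g, hg⟩ := (LinearMap.dualMap_surjective_iff.mpr C.injective_subtype) f
    refine ⟨fun i => g ((Pi.single i (1 : F) : Fin N → F)), ?_⟩
    ext c
    have hc : (c : Fin N → F) = ∑ i, (c : Fin N → F) i • (Pi.single i (1 : F) : Fin N → F) := by
      have h1 := Finset.univ_sum_single (c : Fin N → F)
      conv_lhs => rw [← h1]
      refine Finset.sum_congr rfl fun i _ => ?_
      rw [← Pi.single_smul, smul_eq_mul, mul_one]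
    have h2 : Φ (fun i => g ((Pi.single i (1 : F) : Fin N → F))) c = ∑ i, g ((Pi.single i (1 : F) : Fin N → F)) * (c : Fin N → F) i := rfl
    rw [h2, ← hg]
    calc ∑ i, g ((Pi.single i (1 : F) : Fin N → F)) * (c : Fin N → F) i
        = g (∑ i, (c : Fin N → F) i • (Pi.single i (1 : F) : Fin N → F)) := by
          rw [map_sum]
          exact Finset.sum_congr rfl fun i _ => by rw [map_smul, smul_eq_mul, mul_comm]
      _ = g (c : Fin N → F) := by rw [← hc]
      _ = (C.subtype.dualMap g) c := rfl
  have h := LinearMap.finrank_range_add_finrank_ker Φ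
  rw [LinearMap.range_eq_top.mpr hsurj, finrank_top, hker, Subspace.dual_finrank_eq,
    Module.finrank_pi, Fintype.card_fin] at h
  omega

end Helpers

set_option maxHeartbeats 4000000 in
set_option synthInstance.maxHeartbeats 400000 in
/-- for `a ∉ Ham(q,m,1)`, the standardly extended Simplex code
`Sim(q,m,a)̄(-1)` has parameters `[(qᵐ+q-2)/(q-1), m, q^{m-1}]`, the stated
two-weight enumerator, and its dual has parameters
`[(qᵐ+q-2)/(q-1), (qᵐ+q-2)/(q-1)-m, 2]`. -/
theorem stmt18 {F K : Type*} [Field F] [Fintype F] [DecidableEq F]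
    [Field K] [Fintype K] [Algebra F K]
    (q m n : ℕ) (hF : Fintype.card F = q) (hq : 2 < q) (hm : 2 ≤ m)
    (hK : Fintype.card K = q ^ m) (hn : n * (q - 1) = q ^ m - 1)
    (α : K) (hα : IsPrimitiveRoot α (q ^ m - 1))
    (a : Fin n → F) (ha : ∀ i, a i ≠ 0)
    (hnot : ¬ (∑ i, algebraMap F K (a i) * α ^ (i : ℕ) = 0))
    (Ham : Submodule F (Fin n → F))
    (hHam : ∀ c, c ∈ Ham ↔ ∑ i, algebraMap F K (a i * c i) * α ^ (i : ℕ) = 0) :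
    Module.finrank F (extCode (dualCode Ham) (fun _ => -1)) = m ∧
    minDist (extCode (dualCode Ham) (fun _ => -1)) = q ^ (m - 1) ∧
    weightCount (extCode (dualCode Ham) (fun _ => -1)) 0 = 1 ∧
    weightCount (extCode (dualCode Ham) (fun _ => -1)) (q ^ (m - 1)) =
      q ^ (m - 1) - 1 ∧
    weightCount (extCode (dualCode Ham) (fun _ => -1)) (q ^ (m - 1) + 1) =
      q ^ (m - 1) * (q - 1) ∧
    (∀ w : ℕ, w ∉ ({0, q ^ (m - 1), q ^ (m - 1) + 1} : Set ℕ) →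
      weightCount (extCode (dualCode Ham) (fun _ => -1)) w = 0) ∧
    Module.finrank F (dualCode (extCode (dualCode Ham) (fun _ => -1))) =
      (n + 1) - m ∧
    minDist (dualCode (extCode (dualCode Ham) (fun _ => -1))) = 2 := by
  classical
  have hq1 : 1 < q := by omega
  have hq10 : 0 < q - 1 := by omega
  have hQm1 : 1 < q ^ m := Nat.one_lt_pow (by omega) hq1
  have hn0 : 0 < n := by
    rcases Nat.eq_zero_or_pos n with h | h
    · subst h; simp at hn; omega
    · exact h
  set Q := q ^ (m - 1) with hQdef
  have hQq : q ^ m = Q * q := by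
    rw [hQdef, ← pow_succ]
    congr 1
    omega
  have hQ1 : 1 ≤ Q := Nat.one_le_pow _ _ (by omega)
  have hQqle : q ≤ Q := by
    calc q = q ^ 1 := (pow_one q).symm
    _ ≤ Q := Nat.pow_le_pow_right (by omega) (by omega)
  have hQle : Q ≤ q ^ m := by
    rw [hQq]; exact Nat.le_mul_of_pos_right _ (by omega)
  haveI : Module.Finite F K := Module.Finite.of_finite
  have hrank : Module.finrank F K = m := by
    have h := Module.card_eq_pow_finrank (K := F) (V := K)
    rw [hF, hK] at h
    exact Nat.pow_right_injective (by omega) h.symm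
  haveI : Finite (Module.Dual F K) :=
    Finite.of_injective _ (DFunLike.coe_injective (F := Module.Dual F K))
  haveI : Fintype (Module.Dual F K) := Fintype.ofFinite _
  have hdrank : Module.finrank F (Module.Dual F K) = m := by
    rw [Subspace.dual_finrank_eq]; exact hrank
  have hdual : ∀ y : K, y ≠ 0 → ∃ g : Module.Dual F K, g y ≠ 0 := by
    intro y hy
    by_contra h
    push_neg at h
    exact hy ((Module.forall_dual_apply_eq_zero_iff F y).mp h)
  have hαone : α ^ (q ^ m - 1) = 1 := hα.pow_eq_one
  have hαne : α ≠ 0 := by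
    intro h
    rw [h, zero_pow (by omega : q ^ m - 1 ≠ 0)] at hαone
    exact zero_ne_one hαone
  have hmapC : ∀ u : F, u ≠ 0 → algebraMap F K u ≠ 0 := fun u hu h =>
    hu ((algebraMap F K).injective (by rw [h, map_zero]))
  obtain ⟨θ, hθeq⟩ : ∃ θ : Fin n → K, ∀ i, θ i = algebraMap F K (a i) * α ^ (i : ℕ) :=
    ⟨fun i => algebraMap F K (a i) * α ^ (i : ℕ), fun i => rfl⟩
  have hθne : ∀ i, θ i ≠ 0 := fun i => by
    rw [hθeq]; exact mul_ne_zero (hmapC _ (ha i)) (pow_ne_zero _ hαne)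
  obtain ⟨s, hsdef⟩ : ∃ s : K, s = ∑ i, θ i := ⟨_, rfl⟩
  have hs : s ≠ 0 := by
    rw [hsdef]
    intro h
    apply hnot
    rw [← h]
    exact Finset.sum_congr rfl fun i _ => (hθeq i).symm
  have hsep : ∀ i j : ℕ, i ≤ j → j - i < n →
      (∃ c : F, α ^ j = algebraMap F K c * α ^ i) → j = i := by
    rintro i j hij hlt ⟨c, hc⟩
    have hcne : c ≠ 0 := by
      intro h
      rw [h, map_zero, zero_mul] at hc
      exact pow_ne_zero j hαne hc
    have h1 : α ^ (j - i) = algebraMap F K c := by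
      have h2 : α ^ (j - i) * α ^ i = algebraMap F K c * α ^ i := by
        rw [← pow_add, Nat.sub_add_cancel hij]
        exact hc
      exact mul_right_cancel₀ (pow_ne_zero i hαne) h2
    have hc1 : c ^ (q - 1) = 1 := by
      have h3 := FiniteField.pow_card_sub_one_eq_one c hcne
      rwa [hF] at h3
    have h2 : α ^ ((j - i) * (q - 1)) = 1 := by
      rw [pow_mul, h1, ← map_pow, hc1, map_one]
    have h3 : q ^ m - 1 ∣ (j - i) * (q - 1) := (hα.pow_eq_one_iff_dvd _).mp h2
    rw [← hn] at h3
    have h4 : n ∣ j - i := (Nat.mul_dvd_mul_iff_right hq10).mp h3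
    have h5 := Nat.eq_zero_of_dvd_of_lt h4 hlt
    omega
  have hproj : ∀ i j : Fin n, (∃ c : F, θ i = algebraMap F K c * θ j) → i = j := by
    rintro i j ⟨c, hc⟩
    set c' : F := c * a j * (a i)⁻¹ with hc'def
    have hc' : α ^ (i : ℕ) = algebraMap F K c' * α ^ (j : ℕ) := by
      have h2 : algebraMap F K (a i) * α ^ (i : ℕ)
          = algebraMap F K (a i) * (algebraMap F K c' * α ^ (j : ℕ)) := by
        have h3 : algebraMap F K (a i) * α ^ (i : ℕ)
            = algebraMap F K c * (algebraMap F K (a j) * α ^ (j : ℕ)) := by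
          rw [← hθeq, ← hθeq]
          exact hc
        rw [h3, hc'def, map_mul, map_mul, map_inv₀]
        rw [show (algebraMap F K) (a i) * ((algebraMap F K) c * (algebraMap F K) (a j)
              * ((algebraMap F K) (a i))⁻¹ * α ^ (j : ℕ))
            = ((algebraMap F K) (a i) * ((algebraMap F K) (a i))⁻¹)
              * ((algebraMap F K) c * ((algebraMap F K) (a j) * α ^ (j : ℕ))) from by ring]
        rw [mul_inv_cancel₀ (hmapC _ (ha i)), one_mul]
      exact mul_left_cancel₀ (hmapC _ (ha i)) h2
    have hcne' : c' ≠ 0 := by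
      intro h
      rw [h, map_zero, zero_mul] at hc'
      exact pow_ne_zero _ hαne hc'
    rcases le_total (j : ℕ) (i : ℕ) with h | h
    · exact Fin.ext (hsep j i h (by have := i.isLt; omega) ⟨c', hc'⟩)
    · have hc'' : α ^ (j : ℕ) = algebraMap F K c'⁻¹ * α ^ (i : ℕ) := by
        rw [hc', map_inv₀, ← mul_assoc, inv_mul_cancel₀ (hmapC _ hcne'), one_mul]
      exact (Fin.ext (hsep i j h (by have := j.isLt; omega) ⟨c'⁻¹, hc''⟩)).symm
  have hcover : ∀ x : K, x ≠ 0 → ∃ (i : Fin n) (u : F), u ≠ 0 ∧ x = algebraMap F K u * θ i := by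
    intro x hx
    obtain ⟨k, hk⟩ := exists_pow_eq α (by rw [hK]; exact hα) x hx
    have hαn1 : (α ^ n) ^ (q - 1) = 1 := by
      rw [← pow_mul, hn]; exact hαone
    have hαnq : (α ^ n) ^ q = α ^ n := by
      calc (α ^ n) ^ q = (α ^ n) ^ (q - 1) * α ^ n := by
            rw [← pow_succ]; congr 1; omega
      _ = α ^ n := by rw [hαn1, one_mul]
    obtain ⟨v, hv⟩ := exists_algebraMap_eq (α ^ n) (by rw [hF]; exact hαnq)
    have hvne : v ≠ 0 := by
      intro h; rw [h, map_zero] at hv; exact pow_ne_zero n hαne hv.symm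
    set r : Fin n := ⟨k % n, Nat.mod_lt _ hn0⟩ with hrdef
    refine ⟨r, v ^ (k / n) * (a r)⁻¹,
      mul_ne_zero (pow_ne_zero _ hvne) (inv_ne_zero (ha r)), ?_⟩
    have hr : θ r = algebraMap F K (a r) * α ^ (k % n) := hθeq r
    rw [hr, map_mul, map_pow, hv, map_inv₀, ← hk]
    have hksplit : α ^ k = (α ^ n) ^ (k / n) * α ^ (k % n) := by
      rw [← pow_mul, ← pow_add]
      congr 1
      exact (Nat.div_add_mod k n).symm
    rw [hksplit]
    field_simp
    rw [eq_div_iff (hmapC _ (ha r))]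
    ring
  have hspan : ∀ g : Module.Dual F K, (∀ i, g (θ i) = 0) → g = 0 := by
    intro g hg
    ext x
    simp only [LinearMap.zero_apply]
    rcases eq_or_ne x 0 with rfl | hx
    · simp
    · obtain ⟨i, u, -, rfl⟩ := hcover x hx
      rw [← Algebra.smul_def, map_smul, hg i, smul_zero]
  obtain ⟨L, hLapply⟩ : ∃ L : (Fin n → F) →ₗ[F] K, ∀ c, L c = ∑ i, c i • θ i :=
    ⟨{ toFun := fun c => ∑ i, c i • θ i
       map_add' := by
         intro c d
         simp only [Pi.add_apply, add_smul, Finset.sum_add_distrib]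
       map_smul' := by
         intro r c
         simp only [Pi.smul_apply, smul_eq_mul, RingHom.id_apply, Finset.smul_sum,
           smul_smul] }, fun c => rfl⟩
  have hLker : ∀ c, L c = 0 ↔ c ∈ Ham := by
    intro c
    rw [hHam, hLapply]
    have he : ∀ i : Fin n, c i • θ i = algebraMap F K (a i * c i) * α ^ (i : ℕ) := by
      intro i
      rw [hθeq, Algebra.smul_def, map_mul]
      ring
    rw [Finset.sum_congr rfl fun i _ => he i]
  have hLsingle : ∀ i, L (Pi.single i 1) = θ i := by
    intro i
    rw [hLapply]
    rw [Finset.sum_eq_single i (fun b _ hb => by rw [Pi.single_apply, if_neg hb, zero_smul])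
      (fun h => absurd (Finset.mem_univ i) h)]
    rw [Pi.single_apply, if_pos rfl, one_smul]
  have hLsurj : Function.Surjective L := by
    intro x
    suffices hx : x ∈ LinearMap.range L by exact hx
    rcases eq_or_ne x 0 with rfl | hx
    · exact zero_mem _
    · obtain ⟨i, u, -, rfl⟩ := hcover x hx
      rw [← Algebra.smul_def]
      exact Submodule.smul_mem _ u ⟨Pi.single i 1, hLsingle i⟩
  obtain ⟨b, hbc, hbl⟩ : ∃ b : Fin (n + 1) → K,
      (∀ i : Fin n, b i.castSucc = θ i) ∧ b (Fin.last n) = -s :=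
    ⟨Fin.snoc θ (-s), fun i => Fin.snoc_castSucc _ _ i, Fin.snoc_last _ _⟩
  obtain ⟨ψ, hψa⟩ : ∃ ψ : Module.Dual F K →ₗ[F] (Fin n → F), ∀ g i, ψ g i = g (θ i) :=
    ⟨{ toFun := fun g i => g (θ i)
       map_add' := by intro g h; funext i; simp
       map_smul' := by intro r g; funext i; simp }, fun g i => rfl⟩
  obtain ⟨Ψ, hΨa⟩ : ∃ Ψ : Module.Dual F K →ₗ[F] (Fin (n + 1) → F), ∀ g j, Ψ g j = g (b j) :=
    ⟨{ toFun := fun g j => g (b j)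
       map_add' := by intro g h; funext j; simp
       map_smul' := by intro r g; funext j; simp }, fun g j => rfl⟩
  have hΨc : ∀ g (i : Fin n), Ψ g i.castSucc = g (θ i) := fun g i => by
    rw [hΨa, hbc]
  have hΨl : ∀ g : Module.Dual F K, Ψ g (Fin.last n) = - g s := fun g => by
    rw [hΨa, hbl, map_neg]
  have hψzero : ∀ g, ψ g = 0 → g = 0 := by
    intro g hg
    exact hspan g fun i => by rw [← hψa g i, hg]; simp
  have hψinj : Function.Injective ψ := by
    intro g h hgh
    have h0 : g - h = 0 := hψzero _ (by rw [map_sub, hgh, sub_self])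
    exact sub_eq_zero.mp h0
  have hΨzero : ∀ g, Ψ g = 0 → g = 0 := by
    intro g hg
    refine hψzero g ?_
    funext i
    rw [hψa, ← hΨc g i, hg]
    simp
  have hΨinj : Function.Injective Ψ := by
    intro g h hgh
    have h0 : g - h = 0 := hΨzero _ (by rw [map_sub, hgh, sub_self])
    exact sub_eq_zero.mp h0
  have hψmem : ∀ g, ψ g ∈ dualCode Ham := by
    intro g
    rw [mem_dualCode]
    intro c hc
    have h1 : ∑ i, ψ g i * c i = g (L c) := by
      rw [hLapply, map_sum]
      refine Finset.sum_congr rfl fun i _ => ?_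
      rw [hψa, map_smul, smul_eq_mul, mul_comm]
    have h2 : L c = 0 := (hLker c).mpr hc
    rw [h1, h2, map_zero]
  have hHamrank : Module.finrank F Ham + m = n := by
    have h := LinearMap.finrank_range_add_finrank_ker L
    rw [LinearMap.range_eq_top.mpr hLsurj, finrank_top, hrank, Module.finrank_pi,
      Fintype.card_fin] at h
    have hkerH : LinearMap.ker L = Ham := by
      ext c
      rw [LinearMap.mem_ker]
      exact hLker c
    rw [hkerH] at h
    omega
  have hψrange : LinearMap.range ψ = dualCode Ham := by
    have hle : LinearMap.range ψ ≤ dualCode Ham := by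
      rintro x ⟨g, rfl⟩
      exact hψmem g
    refine Submodule.eq_of_le_of_finrank_le hle ?_
    have h1 : Module.finrank F (LinearMap.range ψ) = m := by
      rw [← (LinearEquiv.ofInjective ψ hψinj).finrank_eq, hdrank]
    have h2 := finrank_dualCode_add Ham
    omega
  have hcode : extCode (dualCode Ham) (fun _ => -1) = LinearMap.range Ψ := by
    ext x
    rw [mem_extCode]
    constructor
    · rintro ⟨h1, h2⟩
      rw [← hψrange] at h1
      obtain ⟨g, hg⟩ := h1
      have hx : ∀ i : Fin n, x i.castSucc = g (θ i) := fun i =>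
        (congrFun hg i).symm.trans (hψa g i)
      refine ⟨g, ?_⟩
      funext j
      refine Fin.lastCases ?_ ?_ j
      · have hsum : ∑ i, (fun _ : Fin n => (-1 : F)) i * x i.castSucc = - g s := by
          rw [hsdef, map_sum, ← Finset.sum_neg_distrib]
          exact Finset.sum_congr rfl fun i _ => by rw [hx i, neg_one_mul]
        rw [hΨl, h2, hsum]
      · intro i
        rw [hΨc, hx i]
    · rintro ⟨g, rfl⟩
      constructor
      · rw [← hψrange]
        refine ⟨g, ?_⟩
        funext i
        rw [hψa, hΨc]
      · have hsum : ∑ i, (fun _ : Fin n => (-1 : F)) i * Ψ g i.castSucc = - g s := by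
          rw [hsdef, map_sum, ← Finset.sum_neg_distrib]
          exact Finset.sum_congr rfl fun i _ => by rw [hΨc, neg_one_mul]
        rw [hΨl, hsum]
  have hwtψ : ∀ g : Module.Dual F K, g ≠ 0 → hammingNorm (ψ g) = Q := by
    intro g hg
    haveI : Fintype ↥(LinearMap.ker g) := Fintype.ofFinite _
    have hgker : Module.finrank F (LinearMap.ker g) = m - 1 := by
      have h := finrank_ker_add_one g hg
      rw [hrank] at h
      omega
    have hgkercard : Fintype.card (LinearMap.ker g) = Q := by
      rw [Module.card_eq_pow_finrank (K := F) (V := LinearMap.ker g), hF, hgker]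
    set Zc := Finset.univ.filter (fun i : Fin n => g (θ i) = 0) with hZc
    set S := Finset.univ.filter (fun x : K => x ≠ 0 ∧ g x = 0) with hSdef
    have hS1 : S.card + 1 = Q := by
      have e : Fintype.card {x : K // g x = 0} = Fintype.card (LinearMap.ker g) :=
        Fintype.card_congr (Equiv.subtypeEquivRight (fun x => (LinearMap.mem_ker).symm))
      rw [Fintype.card_subtype] at e
      have h0 : (Finset.univ.filter (fun x : K => g x = 0)).card = Q := by
        rw [e, hgkercard]
      have hins : Finset.univ.filter (fun x : K => g x = 0) = insert (0 : K) S := by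
        ext x
        simp only [Finset.mem_filter, Finset.mem_univ, true_and, Finset.mem_insert, hSdef]
        rcases eq_or_ne x 0 with rfl | hx
        · simp
        · simp [hx]
      rw [hins, Finset.card_insert_of_notMem (by simp [hSdef])] at h0
      omega
    have hFcard : (Finset.univ.filter (fun u : F => u ≠ 0)).card = q - 1 := by
      rw [Finset.filter_ne' Finset.univ (0 : F), Finset.card_erase_of_mem (Finset.mem_univ 0),
        Finset.card_univ, hF]
    have hbijcard : (Zc ×ˢ Finset.univ.filter (fun u : F => u ≠ 0)).card = S.card := by
      refine Finset.card_bij (fun p _ => algebraMap F K p.2 * θ p.1) ?_ ?_ ?_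
      · rintro ⟨i, u⟩ hp
        rw [Finset.mem_product] at hp
        obtain ⟨hi, hu⟩ := hp
        rw [hZc, Finset.mem_filter] at hi
        rw [Finset.mem_filter] at hu
        show algebraMap F K u * θ i ∈ S
        rw [hSdef, Finset.mem_filter]
        refine ⟨Finset.mem_univ _, mul_ne_zero (hmapC _ hu.2) (hθne i), ?_⟩
        rw [← Algebra.smul_def, map_smul, hi.2, smul_zero]
      · rintro ⟨i, u⟩ h1 ⟨j, v⟩ h2 heq0
        have heq : algebraMap F K u * θ i = algebraMap F K v * θ j := heq0
        rw [Finset.mem_product, hZc, Finset.mem_filter, Finset.mem_filter] at h1 h2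
        have hu : u ≠ 0 := h1.2.2
        have hv : v ≠ 0 := h2.2.2
        have hij : i = j := by
          apply hproj
          refine ⟨u⁻¹ * v, ?_⟩
          rw [map_mul, map_inv₀, mul_assoc, ← heq, ← mul_assoc,
            inv_mul_cancel₀ (hmapC _ hu), one_mul]
        subst hij
        have huv : u = v := by
          have h3 := mul_right_cancel₀ (hθne i) heq
          exact (algebraMap F K).injective h3
        rw [huv]
      · intro x hx
        rw [hSdef, Finset.mem_filter] at hx
        obtain ⟨-, hx0, hgx⟩ := hx
        obtain ⟨i, u, hu, rfl⟩ := hcover x hx0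
        have hgθ : g (θ i) = 0 := by
          rw [← Algebra.smul_def, map_smul, smul_eq_mul] at hgx
          rcases mul_eq_zero.mp hgx with h | h
          · exact absurd h hu
          · exact h
        refine ⟨(i, u), ?_, rfl⟩
        rw [Finset.mem_product, hZc, Finset.mem_filter, Finset.mem_filter]
        exact ⟨⟨Finset.mem_univ _, hgθ⟩, Finset.mem_univ _, hu⟩
    have hZcQ : Zc.card * (q - 1) = Q - 1 := by
      rw [Finset.card_product, hFcard] at hbijcard
      omega
    have hnorm : hammingNorm (ψ g) = n - Zc.card := by
      show (Finset.univ.filter (fun i : Fin n => ψ g i ≠ 0)).card = n - Zc.card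
      have hfe : Finset.univ.filter (fun i : Fin n => ψ g i ≠ 0)
          = Finset.univ \ Zc := by
        rw [hZc, ← Finset.filter_not]
        exact Finset.filter_congr (fun i _ => by rw [hψa])
      rw [hfe, Finset.card_sdiff_of_subset (Finset.subset_univ _), Finset.card_univ, Fintype.card_fin]
    rw [hnorm]
    have e1 : (n - Zc.card) * (q - 1) = Q * (q - 1) := by
      rw [tsub_mul, hn, hZcQ]
      have e2 : Q * (q - 1) = q ^ m - Q := by
        rw [Nat.mul_sub, mul_one, ← hQq]
      rw [e2]
      omega
    exact Nat.eq_of_mul_eq_mul_right hq10 e1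
  have hwtΨ : ∀ g : Module.Dual F K, g ≠ 0 →
      hammingNorm (Ψ g) = Q + (if g s = 0 then 0 else 1) := by
    intro g hg
    rw [hammingNorm_split (Ψ g)]
    congr 1
    · have he : (fun i : Fin n => Ψ g i.castSucc) = ψ g := by
        funext i
        rw [hΨc, hψa]
      rw [he, hwtψ g hg]
    · rw [hΨl]
      simp only [neg_eq_zero]
  obtain ⟨evs, hevsa⟩ : ∃ evs : Module.Dual F K →ₗ[F] F, ∀ g, evs g = g s :=
    ⟨{ toFun := fun g => g s
       map_add' := fun g h => rfl
       map_smul' := fun r g => rfl }, fun g => rfl⟩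
  obtain ⟨g₀, hg₀⟩ := hdual s hs
  have hevs : evs ≠ 0 := by
    intro h
    apply hg₀
    rw [← hevsa, h]
    simp
  have hkevs : Module.finrank F (LinearMap.ker evs) = m - 1 := by
    have h := finrank_ker_add_one evs hevs
    rw [hdrank] at h
    omega
  have hkevscard : Nat.card ↥(LinearMap.ker evs) = Q := by
    haveI : Fintype ↥(LinearMap.ker evs) := Fintype.ofFinite _
    rw [Nat.card_eq_fintype_card, Module.card_eq_pow_finrank (K := F) (V := LinearMap.ker evs),
      hF, hkevs]
  have hDcard : Nat.card (Module.Dual F K) = q ^ m := by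
    rw [Nat.card_eq_fintype_card, Module.card_eq_pow_finrank (K := F) (V := Module.Dual F K),
      hF, hdrank]
  have hcount : ∀ P : (Fin (n + 1) → F) → Prop,
      Nat.card {c : ↥(extCode (dualCode Ham) (fun _ => -1)) // P (c : Fin (n + 1) → F)}
        = Nat.card {g : Module.Dual F K // P (Ψ g)} := by
    intro P
    refine Nat.card_congr (Equiv.symm (Equiv.ofBijective
      (fun gp => ⟨⟨Ψ gp.1, by rw [hcode]; exact ⟨gp.1, rfl⟩⟩, gp.2⟩) ⟨?_, ?_⟩))
    · rintro ⟨g, hg⟩ ⟨g', hg'⟩ h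
      have h1 : Ψ g = Ψ g' := congrArg (fun z => (z.1 : Fin (n + 1) → F)) h
      exact Subtype.ext (hΨinj h1)
    · rintro ⟨⟨x, hx⟩, hPx⟩
      rw [hcode] at hx
      obtain ⟨g, rfl⟩ := hx
      exact ⟨⟨g, hPx⟩, rfl⟩
  have hc0 : weightCount (extCode (dualCode Ham) (fun _ => -1)) 0 = 1 := by
    rw [show weightCount (extCode (dualCode Ham) (fun _ => -1)) 0
        = Nat.card {g : Module.Dual F K // hammingNorm (Ψ g) = 0} from hcount (fun v => hammingNorm v = 0)]
    have hiff : ∀ g : Module.Dual F K, hammingNorm (Ψ g) = 0 ↔ g = 0 := by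
      intro g
      constructor
      · intro h
        by_contra hg
        rw [hwtΨ g hg] at h
        split_ifs at h <;> omega
      · rintro rfl
        rw [map_zero]
        exact hammingNorm_zero
    rw [Nat.card_congr (Equiv.subtypeEquivRight hiff)]
    have e1 : {g : Module.Dual F K // g = 0} ≃ Unit :=
      { toFun := fun _ => Unit.unit
        invFun := fun _ => ⟨0, rfl⟩
        left_inv := fun a => Subtype.ext a.2.symm
        right_inv := fun _ => rfl }
    rw [Nat.card_congr e1]
    exact Nat.card_unique
  have hcQ : weightCount (extCode (dualCode Ham) (fun _ => -1)) Q = Q - 1 := by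
    rw [show weightCount (extCode (dualCode Ham) (fun _ => -1)) Q
        = Nat.card {g : Module.Dual F K // hammingNorm (Ψ g) = Q} from hcount (fun v => hammingNorm v = Q)]
    have hiff : ∀ g : Module.Dual F K,
        hammingNorm (Ψ g) = Q ↔ (g ∈ LinearMap.ker evs ∧ g ≠ 0) := by
      intro g
      rw [LinearMap.mem_ker, hevsa]
      constructor
      · intro h
        have hg : g ≠ 0 := by
          rintro rfl
          rw [map_zero, hammingNorm_zero] at h
          omega
        rw [hwtΨ g hg] at h
        refine ⟨?_, hg⟩
        by_contra hgs
        rw [if_neg hgs] at h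
        omega
      · rintro ⟨h1, h2⟩
        rw [hwtΨ g h2, if_pos h1]
        omega
    rw [Nat.card_congr (Equiv.subtypeEquivRight hiff)]
    have e : {g : Module.Dual F K // g ∈ LinearMap.ker evs ∧ g ≠ 0}
        ≃ {x : ↥(LinearMap.ker evs) // ¬ (x = 0)} :=
      { toFun := fun p => ⟨⟨p.1, p.2.1⟩, fun h => p.2.2 (congrArg Subtype.val h)⟩
        invFun := fun p => ⟨p.1.1, ⟨p.1.2, fun h => p.2 (Subtype.ext h)⟩⟩
        left_inv := fun p => rfl
        right_inv := fun p => rfl }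
    rw [Nat.card_congr e]
    rw [nat_card_subtype_compl (fun x : ↥(LinearMap.ker evs) => x = 0)]
    rw [hkevscard]
    have e1 : {x : ↥(LinearMap.ker evs) // x = 0} ≃ Unit :=
      { toFun := fun _ => Unit.unit
        invFun := fun _ => ⟨0, rfl⟩
        left_inv := fun a => Subtype.ext a.2.symm
        right_inv := fun _ => rfl }
    rw [Nat.card_congr e1]
    rw [Nat.card_unique]
  have hcQ1 : weightCount (extCode (dualCode Ham) (fun _ => -1)) (Q + 1) = Q * (q - 1) := by
    rw [show weightCount (extCode (dualCode Ham) (fun _ => -1)) (Q + 1)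
        = Nat.card {g : Module.Dual F K // hammingNorm (Ψ g) = (Q + 1)} from hcount (fun v => hammingNorm v = Q + 1)]
    have hiff : ∀ g : Module.Dual F K,
        hammingNorm (Ψ g) = Q + 1 ↔ ¬ (g s = 0) := by
      intro g
      constructor
      · intro h hgs
        have hg : g ≠ 0 := by
          rintro rfl
          rw [map_zero, hammingNorm_zero] at h
          omega
        rw [hwtΨ g hg, if_pos hgs] at h
        omega
      · intro hgs
        have hg : g ≠ 0 := by
          rintro rfl
          exact hgs (LinearMap.zero_apply s)
        rw [hwtΨ g hg, if_neg hgs]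
    rw [Nat.card_congr (Equiv.subtypeEquivRight hiff),
      nat_card_subtype_compl (fun g : Module.Dual F K => g s = 0)]
    have ekk : Nat.card {g : Module.Dual F K // g s = 0} = Q := by
      have eiff : ∀ g : Module.Dual F K, g s = 0 ↔ g ∈ LinearMap.ker evs := by
        intro g
        rw [LinearMap.mem_ker, hevsa]
      rw [Nat.card_congr (Equiv.subtypeEquivRight eiff), hkevscard]
    rw [ekk, hDcard]
    have e2 : Q * (q - 1) = q ^ m - Q := by
      rw [Nat.mul_sub, mul_one, ← hQq]
    omega
  have hcother : ∀ w : ℕ, w ∉ ({0, Q, Q + 1} : Set ℕ) →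
      weightCount (extCode (dualCode Ham) (fun _ => -1)) w = 0 := by
    intro w hw
    simp only [Set.mem_insert_iff, Set.mem_singleton_iff, not_or] at hw
    obtain ⟨hw0, hwQ, hwQ1⟩ := hw
    rw [show weightCount (extCode (dualCode Ham) (fun _ => -1)) w
        = Nat.card {g : Module.Dual F K // hammingNorm (Ψ g) = w} from hcount (fun v => hammingNorm v = w)]
    haveI : IsEmpty {g : Module.Dual F K // hammingNorm (Ψ g) = w} := by
      refine ⟨fun p => ?_⟩
      obtain ⟨g, hg⟩ := p
      rcases eq_or_ne g 0 with rfl | hgne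
      · rw [map_zero, hammingNorm_zero] at hg
        exact hw0 hg.symm
      · rw [hwtΨ g hgne] at hg
        split_ifs at hg <;> omega
    exact Nat.card_of_isEmpty
  have hexg : ∃ g : Module.Dual F K, g ≠ 0 ∧ g s = 0 := by
    by_contra hcon
    push_neg at hcon
    have hbot : LinearMap.ker evs = ⊥ := by
      rw [eq_bot_iff]
      intro g hgmem
      rw [Submodule.mem_bot]
      by_contra hgne
      exact hcon g hgne (by rwa [LinearMap.mem_ker, hevsa] at hgmem)
    rw [hbot, finrank_bot] at hkevs
    omega
  have hmin1 : minDist (extCode (dualCode Ham) (fun _ => -1)) = Q := by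
    unfold minDist
    obtain ⟨g, hg, hgs⟩ := hexg
    have hQmem : Q ∈ {w | ∃ c ∈ extCode (dualCode Ham) (fun _ => -1),
        c ≠ 0 ∧ hammingNorm c = w} := by
      refine ⟨Ψ g, ?_, ?_, ?_⟩
      · rw [hcode]; exact ⟨g, rfl⟩
      · intro h; exact hg (hΨzero g h)
      · rw [hwtΨ g hg, if_pos hgs]
        omega
    refine le_antisymm (Nat.sInf_le hQmem) (le_csInf ⟨Q, hQmem⟩ ?_)
    rintro w ⟨c, hc, hcne, rfl⟩
    rw [hcode] at hc
    obtain ⟨g', rfl⟩ := hc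
    have hg' : g' ≠ 0 := fun h => hcne (by rw [h, map_zero])
    rw [hwtΨ g' hg']
    split_ifs <;> omega
  have hrank1 : Module.finrank F ↥(extCode (dualCode Ham) (fun _ => -1)) = m := by
    rw [hcode, ← hdrank]
    exact ((LinearEquiv.ofInjective Ψ hΨinj).finrank_eq).symm
  have hrank2 : Module.finrank F ↥(dualCode (extCode (dualCode Ham) (fun _ => -1)))
      = (n + 1) - m := by
    have h := finrank_dualCode_add (extCode (dualCode Ham) (fun _ => -1))
    rw [hrank1] at h
    omega
  have hmin2 : minDist (dualCode (extCode (dualCode Ham) (fun _ => -1))) = 2 := by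
    unfold minDist
    obtain ⟨j, u, hu, hsu⟩ := hcover (-s) (neg_ne_zero.mpr hs)
    set p : Fin (n + 1) := j.castSucc with hpdef
    set l : Fin (n + 1) := Fin.last n with hldef
    have hpl : p ≠ l := (Fin.castSucc_lt_last j).ne
    set x : Fin (n + 1) → F := (Pi.single p u : Fin (n + 1) → F) + (Pi.single l (-1) : Fin (n + 1) → F) with hxdef
    have hxp : x p = u := by
      rw [hxdef]
      simp [Pi.single_eq_same, Pi.single_eq_of_ne hpl]
    have hxl : x l = -1 := by
      rw [hxdef]
      simp [Pi.single_eq_same, Pi.single_eq_of_ne (Ne.symm hpl)]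
    have hxo : ∀ i, i ≠ p → i ≠ l → x i = 0 := by
      intro i hip hil
      rw [hxdef]
      simp [Pi.single_eq_of_ne hip, Pi.single_eq_of_ne hil]
    have hsingle : ∀ (k : Fin (n + 1)) (v : F) (c : Fin (n + 1) → F),
        ∑ i, (Pi.single k v : Fin (n + 1) → F) i * c i = v * c k := by
      intro k v c
      rw [Finset.sum_eq_single k (fun i _ hi => by rw [Pi.single_eq_of_ne hi, zero_mul])
        (fun h => absurd (Finset.mem_univ k) h)]
      rw [Pi.single_eq_same]
    have hxmem : x ∈ dualCode (extCode (dualCode Ham) (fun _ => -1)) := by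
      rw [mem_dualCode]
      intro c hc
      rw [hcode] at hc
      obtain ⟨g, rfl⟩ := hc
      have hsum : ∑ i, x i * Ψ g i = u * Ψ g p + (-1) * Ψ g l := by
        rw [hxdef]
        simp only [Pi.add_apply, add_mul]
        rw [Finset.sum_add_distrib, hsingle, hsingle]
      rw [hsum, show Ψ g p = g (θ j) from hΨc g j, show Ψ g l = - g s from hΨl g]
      have hgs2 : -(g s) = u * g (θ j) := by
        rw [← map_neg, hsu, ← Algebra.smul_def, map_smul, smul_eq_mul]
      rw [neg_one_mul, neg_neg, ← hgs2]
      exact neg_add_cancel _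
    have hxnorm : hammingNorm x = 2 := by
      have hfil : Finset.univ.filter (fun i => x i ≠ 0) = {p, l} := by
        ext i
        simp only [Finset.mem_filter, Finset.mem_univ, true_and, Finset.mem_insert,
          Finset.mem_singleton]
        constructor
        · intro hxi
          by_contra hcon
          push_neg at hcon
          exact hxi (hxo i hcon.1 hcon.2)
        · rintro (rfl | rfl)
          · rw [hxp]; exact hu
          · rw [hxl]; exact neg_ne_zero.mpr one_ne_zero
      show (Finset.univ.filter (fun i => x i ≠ 0)).card = 2
      rw [hfil, Finset.card_pair hpl]
    have h2mem : 2 ∈ {w | ∃ c ∈ dualCode (extCode (dualCode Ham) (fun _ => -1)),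
        c ≠ 0 ∧ hammingNorm c = w} := by
      refine ⟨x, hxmem, ?_, hxnorm⟩
      intro h
      apply hu
      rw [← hxp, h]
      simp
    refine le_antisymm (Nat.sInf_le h2mem) (le_csInf ⟨2, h2mem⟩ ?_)
    rintro w ⟨c, hc, hcne, rfl⟩
    by_contra hlt
    push_neg at hlt
    have hcase : hammingNorm c = 0 ∨ hammingNorm c = 1 := by omega
    rcases hcase with h0 | h1
    · exact hcne (hammingNorm_eq_zero.mp h0)
    · have h1' : (Finset.univ.filter (fun i => c i ≠ 0)).card = 1 := h1
      obtain ⟨j0, hj0⟩ := Finset.card_eq_one.mp h1'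
      have hcj : c j0 ≠ 0 := by
        have hmem : j0 ∈ Finset.univ.filter (fun i => c i ≠ 0) := by
          rw [hj0]; exact Finset.mem_singleton_self j0
        exact (Finset.mem_filter.mp hmem).2
      have hco : ∀ i, i ≠ j0 → c i = 0 := by
        intro i hi
        by_contra h
        have hmem : i ∈ Finset.univ.filter (fun i => c i ≠ 0) :=
          Finset.mem_filter.mpr ⟨Finset.mem_univ _, h⟩
        rw [hj0, Finset.mem_singleton] at hmem
        exact hi hmem
      have hbj : b j0 ≠ 0 := by
        refine Fin.lastCases (motive := fun j1 => b j1 ≠ 0) ?_ ?_ j0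
        · show b (Fin.last n) ≠ 0
          rw [hbl]
          exact neg_ne_zero.mpr hs
        · intro i
          show b i.castSucc ≠ 0
          rw [hbc]
          exact hθne i
      obtain ⟨g, hgb⟩ := hdual (b j0) hbj
      rw [mem_dualCode] at hc
      have hsum := hc (Ψ g) (by rw [hcode]; exact ⟨g, rfl⟩)
      rw [Finset.sum_eq_single j0 (fun i _ hi => by rw [hco i hi, zero_mul])
        (fun h => absurd (Finset.mem_univ j0) h)] at hsum
      have hz : Ψ g j0 = 0 := (mul_eq_zero.mp hsum).resolve_left hcj
      rw [hΨa] at hz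
      exact hgb hz
  exact ⟨hrank1, hmin1, hc0, hcQ, hcQ1, hcother, hrank2, hmin2⟩
end
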